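/- Consider the SIS model under multi-layer Markovian mobility, with F* = F(v), L* = L(v), and assume δ_i > 0 for at least one patch i. Set A = (L* + D)^{-1} B, M = I − F*, and for p ∈ [0,1]^{nm} define H(p) = (I + A(diag(p) + (I − diag(p)) M))^{-1} A p (the inverse exists for all such p). Then H is monotone: if p₁, p₂ ∈ [0,1]^{nm} with p₂ ≥ p₁ entrywise, then H(p₂) ≥ H(p₁) entrywise. -/

import Mathlib

open Matrix Finset Filter

namespace SISMobility

/-- Index type for (class, patch) pairs: `(α, i)` with `α ∈ {1,…,m}` a class and
`i ∈ {1,…,n}` a patch. -/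
abbrev Idx (n m : ℕ) := Fin m × Fin n

/-- A CTMC generator matrix: nonnegative off-diagonal entries and zero row sums
(so that the diagonal entry is minus the total outgoing rate). -/
def IsGenerator {n : ℕ} (Q : Matrix (Fin n) (Fin n) ℝ) : Prop :=
  (∀ i j, i ≠ j → 0 ≤ Q i j) ∧ ∀ i, ∑ j, Q i j = 0

/-- Strong connectivity of the digraph on `{1,…,n}` with an edge `(i,j)` whenever
`i ≠ j` and `Q i j > 0`. -/
def StronglyConnected {n : ℕ} (Q : Matrix (Fin n) (Fin n) ℝ) : Prop :=
  ∀ i j : Fin n, Relation.ReflTransGen (fun a b => a ≠ b ∧ 0 < Q a b) i j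

/-- The `nm × nm` block-diagonal infection-rate matrix `B` (m copies of `diag β`). -/
noncomputable def Bmat (n m : ℕ) (β : Fin n → ℝ) : Matrix (Idx n m) (Idx n m) ℝ :=
  Matrix.diagonal fun k => β k.2

/-- The `nm × nm` block-diagonal recovery-rate matrix `D` (m copies of `diag δ`). -/
noncomputable def Dmat (n m : ℕ) (δ : Fin n → ℝ) : Matrix (Idx n m) (Idx n m) ℝ :=
  Matrix.diagonal fun k => δ k.2

/-- The block-diagonal mobility matrix `L(x)`: the `α`-block has entries
`l^α_{ii} = ∑_{j≠i} q^α_{ji} x^α_j / x^α_i` and `l^α_{ij} = -q^α_{ji} x^α_j / x^α_i`. -/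
noncomputable def Lmat {n m : ℕ} (Q : Fin m → Matrix (Fin n) (Fin n) ℝ)
    (x : Idx n m → ℝ) : Matrix (Idx n m) (Idx n m) ℝ :=
  fun k l =>
    if k.1 = l.1 then
      if k.2 = l.2 then ∑ j ∈ Finset.univ.filter (· ≠ k.2), Q k.1 j k.2 * x (k.1, j) / x k
      else -(Q k.1 l.2 k.2 * x (k.1, l.2) / x k)
    else 0

/-- The population-fraction matrix `F(x)`: entry `((α,i),(γ,j))` equals
`x^γ_i / ∑_η x^η_i` if `j = i` and `0` otherwise. -/
noncomputable def Fmat {n m : ℕ} (x : Idx n m → ℝ) : Matrix (Idx n m) (Idx n m) ℝ :=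
  fun k l => if l.2 = k.2 then x (l.1, k.2) / ∑ η : Fin m, x (η, k.2) else 0

/-- Right-hand side of the infection dynamics
`ṗ = (B F(x) − D − L(x)) p − diag(p) B F(x) p`. -/
noncomputable def pRHS {n m : ℕ} (β δ : Fin n → ℝ) (Q : Fin m → Matrix (Fin n) (Fin n) ℝ)
    (x p : Idx n m → ℝ) : Idx n m → ℝ :=
  (Bmat n m β * Fmat x - Dmat n m δ - Lmat Q x).mulVec p -
    (Matrix.diagonal p * (Bmat n m β * Fmat x)).mulVec p

/-- Right-hand side of the mobility dynamics `ẋ^α = (Q^α)ᵀ x^α`. -/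
noncomputable def xRHS {n m : ℕ} (Q : Fin m → Matrix (Fin n) (Fin n) ℝ)
    (x : Idx n m → ℝ) : Idx n m → ℝ :=
  fun k => ∑ j, Q k.1 j k.2 * x (k.1, j)

/-- `(p, x)` is a solution of the SIS model under multi-layer Markovian mobility. -/
def IsSolution {n m : ℕ} (β δ : Fin n → ℝ) (Q : Fin m → Matrix (Fin n) (Fin n) ℝ)
    (p x : ℝ → Idx n m → ℝ) : Prop :=
  ∀ t : ℝ, 0 ≤ t → ∀ k : Idx n m,
    HasDerivAt (fun s => p s k) (pRHS β δ Q (x t) (p t) k) t ∧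
    HasDerivAt (fun s => x s k) (xRHS Q (x t) k) t

/-- The radial abscissa `μ(G)`: the largest real part of a (complex) eigenvalue of a
real matrix `G`. -/
noncomputable def muMax {ι : Type*} [Fintype ι] [DecidableEq ι] (G : Matrix ι ι ℝ) : ℝ :=
  sSup (Complex.re '' spectrum ℂ (G.map (algebraMap ℝ ℂ)))

/-- The spectral radius `ρ(G)` of a real matrix `G`. -/
noncomputable def specRad {ι : Type*} [Fintype ι] [DecidableEq ι] (G : Matrix ι ι ℝ) : ℝ :=
  sSup ((fun z : ℂ => ‖z‖) '' spectrum ℂ (G.map (algebraMap ℝ ℂ)))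

/-- The fixed-point map `H(p) = (I + A(diag p + (I − diag p) M))⁻¹ A p`. -/
noncomputable def Hfun {n m : ℕ} (A M : Matrix (Idx n m) (Idx n m) ℝ)
    (p : Idx n m → ℝ) : Idx n m → ℝ :=
  ((1 + A * (Matrix.diagonal p + (1 - Matrix.diagonal p) * M))⁻¹).mulVec (A.mulVec p)

end SISMobility

/-!
Multiplying by `Λ = L* + D` turns `I + A T(p)`, where `T(p) = diag p + (I - diag p)(I - F*)`,
into `W(p) = Λ + B T(p)`, so that `H(p) = W(p)⁻¹ B p`. For `p ∈ [0,1]^{nm}`, `W(p)` is a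
Z-matrix with row sums `δ_i + β_i p_i ≥ 0`, and strong connectivity of each layer chains every
row to a row with `δ_i > 0`. Such weakly chained diagonally dominant Z-matrices are
inverse-positive: `W x ≥ 0` implies `x ≥ 0`. Hence `W(p)` is invertible, `H(p) ≤ 1` because
`W(p) (1 - H(p)) = Λ 1 ≥ 0`, and for `p ≤ q` monotonicity follows from
`W(q) (H(q) - H(p)) = B diag(q - p) F* (1 - H(p)) ≥ 0`.
-/

namespace Matrix

variable {ι : Type*} [Fintype ι]

/-- A weakly chained diagonally dominant Z-matrix. For a Z-matrix, a nonnegative row sum is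
weak diagonal dominance of that row and a positive row sum is strict dominance. -/
structure IsWCDDZMatrix (W : Matrix ι ι ℝ) : Prop where
  apply_nonpos_of_ne : ∀ i j, i ≠ j → W i j ≤ 0
  sum_row_nonneg : ∀ i, 0 ≤ ∑ j, W i j
  exists_chain : ∀ i, ∃ k,
    Relation.ReflTransGen (fun a b => a ≠ b ∧ W a b < 0) i k ∧ 0 < ∑ j, W k j

namespace IsWCDDZMatrix

variable {W : Matrix ι ι ℝ}

lemma sum_row_eq_zero_and_eq_of_isMin (hW : IsWCDDZMatrix W) {x : ι → ℝ} {i : ι}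
    (hmin : ∀ j, x i ≤ x j) (hneg : x i < 0) (hWx : 0 ≤ (W *ᵥ x) i) :
    ∑ j, W i j = 0 ∧ ∀ j, W i j < 0 → x j = x i := by
  have hsplit : (W *ᵥ x) i = (∑ j, W i j) * x i + ∑ j, W i j * (x j - x i) := by
    simp only [mulVec, dotProduct, Finset.sum_mul, ← Finset.sum_add_distrib]
    exact Finset.sum_congr rfl fun j _ => by ring
  have hterm : ∀ j, W i j * (x j - x i) ≤ 0 := by
    intro j
    rcases eq_or_ne i j with rfl | hij
    · simp
    · exact mul_nonpos_of_nonpos_of_nonneg (hW.apply_nonpos_of_ne i j hij)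
        (sub_nonneg.2 (hmin j))
  have hdiag : (∑ j, W i j) * x i ≤ 0 :=
    mul_nonpos_of_nonneg_of_nonpos (hW.sum_row_nonneg i) hneg.le
  have hoff : ∑ j, W i j * (x j - x i) ≤ 0 := Finset.sum_nonpos fun j _ => hterm j
  refine ⟨(mul_eq_zero.1 (by linarith : (∑ j, W i j) * x i = 0)).resolve_right hneg.ne, ?_⟩
  intro j hj
  have hzero := (Finset.sum_eq_zero_iff_of_nonpos fun j _ => hterm j).1 (by linarith) j
    (Finset.mem_univ j)
  linarith [(mul_eq_zero.1 hzero).resolve_left hj.ne]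

/-- A negative minimum of `x` would propagate along a chain to a strictly dominant row. -/
lemma nonneg_of_mulVec_nonneg (hW : IsWCDDZMatrix W) {x : ι → ℝ} (hx : 0 ≤ W *ᵥ x) :
    0 ≤ x := by
  by_contra hneg
  obtain ⟨i₀, hi₀⟩ := Pi.le_def.not.1 hneg |> not_forall.1
  obtain ⟨i, -, hmin⟩ := Finset.exists_min_image Finset.univ x ⟨i₀, Finset.mem_univ i₀⟩
  have hmin : ∀ j, x i ≤ x j := fun j => hmin j (Finset.mem_univ j)
  have hxi : x i < 0 := (hmin i₀).trans_lt (not_le.1 hi₀)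
  have hprop : ∀ k, Relation.ReflTransGen (fun a b => a ≠ b ∧ W a b < 0) i k →
      x k = x i := by
    intro k hk
    induction hk with
    | refl => rfl
    | tail _ hbc ih =>
      have hmin' : ∀ j, x _ ≤ x j := fun j => ih ▸ hmin j
      rw [← ih]
      exact (hW.sum_row_eq_zero_and_eq_of_isMin hmin' (ih ▸ hxi) (hx _)).2 _ hbc.2
  obtain ⟨k, hik, hk⟩ := hW.exists_chain i
  have hxk := hprop k hik
  have := (hW.sum_row_eq_zero_and_eq_of_isMin (hxk ▸ hmin) (hxk ▸ hxi) (hx k)).1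
  linarith

lemma isUnit_det [DecidableEq ι] (hW : IsWCDDZMatrix W) : IsUnit W.det := by
  refine isUnit_iff_ne_zero.2 fun hdet => ?_
  obtain ⟨y, hy, hWy⟩ := exists_mulVec_eq_zero_iff.2 hdet
  have hpos : 0 ≤ y := hW.nonneg_of_mulVec_nonneg (by rw [hWy])
  have hneg : 0 ≤ -y := hW.nonneg_of_mulVec_nonneg (by rw [mulVec_neg, hWy, neg_zero])
  exact hy (le_antisymm (neg_nonneg.1 hneg) hpos)

lemma add (hW : IsWCDDZMatrix W) {V : Matrix ι ι ℝ} (hV : ∀ i j, i ≠ j → V i j ≤ 0)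
    (hVrow : ∀ i, 0 ≤ ∑ j, V i j) : IsWCDDZMatrix (W + V) where
  apply_nonpos_of_ne i j hij := add_nonpos (hW.apply_nonpos_of_ne i j hij) (hV i j hij)
  sum_row_nonneg i := by
    simpa only [add_apply, Finset.sum_add_distrib] using add_nonneg (hW.sum_row_nonneg i) (hVrow i)
  exists_chain i := by
    obtain ⟨k, hik, hk⟩ := hW.exists_chain i
    have hedge : ∀ a b, a ≠ b ∧ W a b < 0 → a ≠ b ∧ (W + V) a b < 0 := fun a b hab =>
      ⟨hab.1, add_neg_of_neg_of_nonpos hab.2 (hV a b hab.1)⟩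
    refine ⟨k, Relation.ReflTransGen.mono hedge i k hik, ?_⟩
    simpa only [add_apply, Finset.sum_add_distrib] using add_pos_of_pos_of_nonneg hk (hVrow k)

end IsWCDDZMatrix

lemma mulVec_one_apply (A : Matrix ι ι ℝ) (i : ι) : (A *ᵥ 1) i = ∑ j, A i j := by
  simp [mulVec, dotProduct]

variable [DecidableEq ι]

def blend (p : ι → ℝ) (M : Matrix ι ι ℝ) : Matrix ι ι ℝ :=
  diagonal p + (1 - diagonal p) * M

variable {F : Matrix ι ι ℝ}

lemma blend_one_sub_apply_of_ne (p : ι → ℝ) {k l : ι} (h : k ≠ l) :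
    blend p (1 - F) k l = -((1 - p k) * F k l) := by
  rw [blend, ← diagonal_one, diagonal_sub, add_apply, diagonal_apply_ne _ h, diagonal_mul,
    sub_apply, diagonal_apply_ne _ h]
  ring

lemma blend_one_sub_mulVec_one (hF : F ∈ rowStochastic ℝ ι) (p : ι → ℝ) :
    blend p (1 - F) *ᵥ 1 = p := by
  rw [blend, add_mulVec, ← mulVec_mulVec, sub_mulVec 1 F, one_mulVec,
    one_vecMul_of_mem_rowStochastic hF, sub_self, mulVec_zero, add_zero]
  ext k
  simp [mulVec_diagonal]

lemma blend_one_sub_sub_blend (p q : ι → ℝ) :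
    blend q (1 - F) - blend p (1 - F) = diagonal (q - p) * F := by
  rw [blend, blend, show diagonal (q - p) = diagonal q - diagonal p from (diagonal_sub q p).symm]
  noncomm_ring

variable {Λ : Matrix ι ι ℝ} {b : ι → ℝ}

lemma IsWCDDZMatrix.add_diagonal_mul_blend (hΛ : IsWCDDZMatrix Λ) (hb : 0 ≤ b)
    (hF : F ∈ rowStochastic ℝ ι) {p : ι → ℝ} (hp0 : 0 ≤ p) (hp1 : p ≤ 1) :
    IsWCDDZMatrix (Λ + diagonal b * blend p (1 - F)) := by
  refine hΛ.add (fun k l hkl => ?_) (fun k => ?_)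
  · rw [diagonal_mul, blend_one_sub_apply_of_ne p hkl, mul_neg, neg_nonpos]
    exact mul_nonneg (hb k) (mul_nonneg (sub_nonneg.2 (hp1 k)) (nonneg_of_mem_rowStochastic hF))
  · rw [← mulVec_one_apply, ← mulVec_mulVec, blend_one_sub_mulVec_one hF, mulVec_diagonal]
    exact mul_nonneg (hb k) (hp0 k)

lemma IsWCDDZMatrix.inv_mulVec_diagonal_mulVec_le_one (hΛ : IsWCDDZMatrix Λ) (hb : 0 ≤ b)
    (hF : F ∈ rowStochastic ℝ ι) {p : ι → ℝ} (hp0 : 0 ≤ p) (hp1 : p ≤ 1) :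
    (Λ + diagonal b * blend p (1 - F))⁻¹ *ᵥ (diagonal b *ᵥ p) ≤ 1 := by
  set W := Λ + diagonal b * blend p (1 - F)
  have hW := hΛ.add_diagonal_mul_blend hb hF hp0 hp1
  have hW1 : W *ᵥ 1 = Λ *ᵥ 1 + diagonal b *ᵥ p := by
    rw [add_mulVec, ← mulVec_mulVec, blend_one_sub_mulVec_one hF]
  have hdefect : W *ᵥ (1 - W⁻¹ *ᵥ (diagonal b *ᵥ p)) = Λ *ᵥ 1 := by
    rw [mulVec_sub, mulVec_mulVec, mul_nonsing_inv _ hW.isUnit_det, one_mulVec, hW1,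
      add_sub_cancel_right]
  have := hW.nonneg_of_mulVec_nonneg
    (hdefect ▸ fun k => (mulVec_one_apply Λ k).symm ▸ hΛ.sum_row_nonneg k)
  exact sub_nonneg.1 this

lemma IsWCDDZMatrix.inv_mulVec_diagonal_mulVec_mono (hΛ : IsWCDDZMatrix Λ) (hb : 0 ≤ b)
    (hF : F ∈ rowStochastic ℝ ι) {p q : ι → ℝ} (hp0 : 0 ≤ p) (hpq : p ≤ q)
    (hq1 : q ≤ 1) :
    (Λ + diagonal b * blend p (1 - F))⁻¹ *ᵥ (diagonal b *ᵥ p) ≤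
      (Λ + diagonal b * blend q (1 - F))⁻¹ *ᵥ (diagonal b *ᵥ q) := by
  set W₁ := Λ + diagonal b * blend p (1 - F)
  set W₂ := Λ + diagonal b * blend q (1 - F)
  set H₁ := W₁⁻¹ *ᵥ (diagonal b *ᵥ p)
  set H₂ := W₂⁻¹ *ᵥ (diagonal b *ᵥ q)
  have hW₁ := hΛ.add_diagonal_mul_blend hb hF hp0 (hpq.trans hq1)
  have hW₂ := hΛ.add_diagonal_mul_blend hb hF (hp0.trans hpq) hq1
  have hWH₁ : W₁ *ᵥ H₁ = diagonal b *ᵥ p := by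
    rw [mulVec_mulVec, mul_nonsing_inv _ hW₁.isUnit_det, one_mulVec]
  have hWH₂ : W₂ *ᵥ H₂ = diagonal b *ᵥ q := by
    rw [mulVec_mulVec, mul_nonsing_inv _ hW₂.isUnit_det, one_mulVec]
  have hW₂W₁ : W₂ = W₁ + diagonal b * (diagonal (q - p) * F) := by
    rw [← blend_one_sub_sub_blend, mul_sub]
    simp only [W₁, W₂]
    abel
  have hslack : 0 ≤ F *ᵥ (1 - H₁) := nonneg_mulVec_of_mem_rowStochastic hF
    (sub_nonneg.2 (hΛ.inv_mulVec_diagonal_mulVec_le_one hb hF hp0 (hpq.trans hq1)))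
  have hdiff :
      W₂ *ᵥ (H₂ - H₁) = diagonal b *ᵥ (diagonal (q - p) *ᵥ (F *ᵥ (1 - H₁))) := by
    rw [mulVec_sub, hWH₂, hW₂W₁, add_mulVec, hWH₁, ← mulVec_mulVec, ← mulVec_mulVec,
      mulVec_sub F, one_vecMul_of_mem_rowStochastic hF]
    ext k
    simp only [Pi.sub_apply, Pi.add_apply, mulVec_diagonal, Pi.one_apply]
    ring
  have := hW₂.nonneg_of_mulVec_nonneg (x := H₂ - H₁) (hdiff ▸ fun k => by
    rw [mulVec_diagonal, mulVec_diagonal]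
    exact mul_nonneg (hb k) (mul_nonneg (sub_nonneg.2 (hpq k)) (hslack k)))
  exact sub_nonneg.1 this

lemma one_add_inv_mul_mul (hΛ : IsUnit Λ.det) (B T : Matrix ι ι ℝ) :
    1 + Λ⁻¹ * B * T = Λ⁻¹ * (Λ + B * T) := by
  rw [mul_add, nonsing_inv_mul _ hΛ, mul_assoc]

lemma isUnit_det_one_add_inv_mul_mul (hΛ : IsUnit Λ.det) {B T : Matrix ι ι ℝ}
    (hW : IsUnit (Λ + B * T).det) : IsUnit (1 + Λ⁻¹ * B * T).det := by
  rw [one_add_inv_mul_mul hΛ, det_mul]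
  exact ((isUnit_nonsing_inv_det_iff).2 hΛ).mul hW

end Matrix

namespace SISMobility

variable {n m : ℕ}

lemma Hfun_inv_mul {Λ : Matrix (Idx n m) (Idx n m) ℝ} (hΛ : IsUnit Λ.det)
    (B M : Matrix (Idx n m) (Idx n m) ℝ) (p : Idx n m → ℝ) :
    Hfun (Λ⁻¹ * B) M p = (Λ + B * blend p M)⁻¹ *ᵥ (B *ᵥ p) := by
  rw [Hfun, ← blend, one_add_inv_mul_mul hΛ, Matrix.mul_inv_rev, nonsing_inv_nonsing_inv _ hΛ,
    mulVec_mulVec, Matrix.mul_assoc, mul_nonsing_inv_cancel_left _ _ hΛ, mulVec_mulVec]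

lemma Fmat_mem_rowStochastic {x : Idx n m → ℝ} (hx : ∀ k, 0 < x k) :
    Fmat x ∈ rowStochastic ℝ (Idx n m) := by
  refine mem_rowStochastic_iff_sum.2 ⟨fun k l => ?_, fun k => ?_⟩
  · unfold Fmat
    split_ifs
    · exact div_nonneg (hx _).le (sum_nonneg fun η _ => (hx _).le)
    · exact le_rfl
  · have hpos : 0 < ∑ η : Fin m, x (η, k.2) := sum_pos (fun η _ => hx _) ⟨k.1, mem_univ _⟩
    rw [Fintype.sum_prod_type]
    simp only [Fmat, sum_ite_eq', mem_univ, if_true]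
    rw [← sum_div, div_self hpos.ne']

variable (Q : Fin m → Matrix (Fin n) (Fin n) ℝ) {x : Idx n m → ℝ}

lemma sum_Lmat_row (k : Idx n m) : ∑ l, Lmat Q x k l = 0 := by
  rw [Fintype.sum_prod_type, Finset.sum_eq_single_of_mem k.1 (mem_univ _)
    fun α _ hα => sum_eq_zero fun j _ => by simp [Lmat, Ne.symm hα],
    ← Finset.add_sum_erase _ _ (mem_univ k.2)]
  have hoff : ∀ j ∈ univ.erase k.2, Lmat Q x k (k.1, j) = -(Q k.1 j k.2 * x (k.1, j) / x k) :=
    fun j hj => by simp [Lmat, Ne.symm (mem_erase.1 hj).1]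
  rw [sum_congr rfl hoff, sum_neg_distrib, ← filter_ne', show Lmat Q x k (k.1, k.2) =
    ∑ j ∈ univ.filter (· ≠ k.2), Q k.1 j k.2 * x (k.1, j) / x k by simp [Lmat]]
  ring

variable {Q}

lemma Lmat_apply_nonpos_of_ne (hQ : ∀ α i j, i ≠ j → 0 ≤ Q α i j) (hx : ∀ k, 0 < x k)
    {k l : Idx n m} (h : k ≠ l) : Lmat Q x k l ≤ 0 := by
  unfold Lmat
  split_ifs with h₁ h₂
  · exact absurd (Prod.ext h₁ h₂) h
  · exact neg_nonpos.2 (div_nonneg (mul_nonneg (hQ _ _ _ (Ne.symm h₂)) (hx _).le) (hx _).le)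
  · exact le_rfl

lemma Lmat_apply_neg (hx : ∀ k, 0 < x k) {α : Fin m} {a b : Fin n} (hab : a ≠ b)
    (hQ : 0 < Q α a b) : Lmat Q x (α, b) (α, a) < 0 := by
  rw [Lmat, if_pos rfl, if_neg (Ne.symm hab), neg_lt_zero]
  exact div_pos (mul_pos hQ (hx _)) (hx _)

/-- An edge `a → b` of `Q^α` is an edge `(α, b) → (α, a)` of `L`, so strong connectivity
chains every `(α, i)` to `(α, i₀)`, where `δ i₀ > 0`. -/
lemma isWCDDZMatrix_Lmat_add_Dmat (hQ : ∀ α i j, i ≠ j → 0 ≤ Q α i j)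
    (hQirr : ∀ α, StronglyConnected (Q α)) (hx : ∀ k, 0 < x k) {δ : Fin n → ℝ}
    (hδ : ∀ i, 0 ≤ δ i) (hδpos : ∃ i, 0 < δ i) :
    IsWCDDZMatrix (Lmat Q x + Dmat n m δ) := by
  have hrow : ∀ k, ∑ l, (Lmat Q x + Dmat n m δ) k l = δ k.2 := fun k => by
    rw [← mulVec_one_apply, add_mulVec, Pi.add_apply, mulVec_one_apply, sum_Lmat_row, Dmat,
      mulVec_diagonal, Pi.one_apply, mul_one, zero_add]
  have hoff : ∀ k l, k ≠ l → (Lmat Q x + Dmat n m δ) k l = Lmat Q x k l := fun k l h => by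
    rw [Matrix.add_apply, Dmat, diagonal_apply_ne _ h, add_zero]
  obtain ⟨i₀, hi₀⟩ := hδpos
  refine ⟨fun k l h => hoff k l h ▸ Lmat_apply_nonpos_of_ne hQ hx h,
    fun k => hrow k ▸ hδ k.2, fun k => ⟨(k.1, i₀), ?_, hrow (k.1, i₀) ▸ hi₀⟩⟩
  have hedge : ∀ a b, Function.swap (fun a b => a ≠ b ∧ 0 < Q k.1 a b) a b →
      (fun k l : Idx n m => k ≠ l ∧ (Lmat Q x + Dmat n m δ) k l < 0) (k.1, a) (k.1, b) :=
    fun a b ⟨hba, hQba⟩ =>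
      have hne : ((k.1, a) : Idx n m) ≠ (k.1, b) := fun h => hba (congrArg Prod.snd h).symm
      ⟨hne, hoff _ _ hne ▸ Lmat_apply_neg hx hba hQba⟩
  simpa using Relation.ReflTransGen.lift (fun j : Fin n => ((k.1, j) : Idx n m)) hedge _ _
    (hQirr k.1 i₀ k.2).swap

end SISMobility

open SISMobility

theorem Hfun_monotone_general
    (n m : ℕ)
    (Q : Fin m → Matrix (Fin n) (Fin n) ℝ)
    (hQgen : ∀ α, IsGenerator (Q α)) (hQirr : ∀ α, StronglyConnected (Q α))
    (β δ : Fin n → ℝ) (hβ : ∀ i, 0 < β i) (hδ : ∀ i, 0 ≤ δ i)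
    (hδpos : ∃ i, 0 < δ i)
    (vα : Fin m → Fin n → ℝ) (hvαpos : ∀ α i, 0 < vα α i)
    (Npop : Fin m → ℝ) (hNpop : ∀ α, 0 < Npop α)
    (v : Idx n m → ℝ) (hv : ∀ k, v k = Npop k.1 * vα k.1 k.2)
    (A M : Matrix (Idx n m) (Idx n m) ℝ)
    (hA : A = (Lmat Q v + Dmat n m δ)⁻¹ * Bmat n m β)
    (hM : M = 1 - Fmat v) :
    (∀ p : Idx n m → ℝ, (∀ k, p k ∈ Set.Icc (0 : ℝ) 1) →
      IsUnit (1 + A * (Matrix.diagonal p + (1 - Matrix.diagonal p) * M)).det) ∧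
    (∀ p₁ p₂ : Idx n m → ℝ,
      (∀ k, p₁ k ∈ Set.Icc (0 : ℝ) 1) → (∀ k, p₂ k ∈ Set.Icc (0 : ℝ) 1) →
      (∀ k, p₁ k ≤ p₂ k) →
      ∀ k, Hfun A M p₁ k ≤ Hfun A M p₂ k) := by
  have hvpos : ∀ k, 0 < v k := fun k => hv k ▸ mul_pos (hNpop _) (hvαpos _ _)
  have hΛ := isWCDDZMatrix_Lmat_add_Dmat (fun α => (hQgen α).1) hQirr hvpos hδ hδpos
  have hF := Fmat_mem_rowStochastic hvpos
  have hb : (0 : Idx n m → ℝ) ≤ fun k => β k.2 := fun k => (hβ k.2).le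
  subst hA hM
  refine ⟨fun p hp => ?_, fun p₁ p₂ hp₁ hp₂ hle => ?_⟩
  · exact isUnit_det_one_add_inv_mul_mul hΛ.isUnit_det
      (hΛ.add_diagonal_mul_blend hb hF (fun k => (hp k).1) (fun k => (hp k).2)).isUnit_det
  · rw [Hfun_inv_mul hΛ.isUnit_det, Hfun_inv_mul hΛ.isUnit_det]
    exact hΛ.inv_mulVec_diagonal_mulVec_mono hb hF (fun k => (hp₁ k).1) hle
      (fun k => (hp₂ k).2)

/-- with `A = (L* + D)⁻¹ B`, `M = I − F*` and
`H(p) = (I + A(diag p + (I − diag p) M))⁻¹ A p`, the map `H` is well defined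
(the inverse exists) and monotone on `[0,1]^{nm}`. -/
theorem Hfun_monotone
    (n m : ℕ) (hn : 2 ≤ n) (hm : 1 ≤ m)
    (Q : Fin m → Matrix (Fin n) (Fin n) ℝ)
    (hQgen : ∀ α, IsGenerator (Q α)) (hQirr : ∀ α, StronglyConnected (Q α))
    (β δ : Fin n → ℝ) (hβ : ∀ i, 0 < β i) (hδ : ∀ i, 0 ≤ δ i)
    (hδpos : ∃ i, 0 < δ i)
    (vα : Fin m → Fin n → ℝ) (hvαpos : ∀ α i, 0 < vα α i)
    (hvαnorm : ∀ α, ∑ i, vα α i = 1)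
    (hvαeig : ∀ α i, ∑ j, Q α j i * vα α j = 0)
    (Npop : Fin m → ℝ) (hNpop : ∀ α, 0 < Npop α)
    (v : Idx n m → ℝ) (hv : ∀ k, v k = Npop k.1 * vα k.1 k.2)
    (A M : Matrix (Idx n m) (Idx n m) ℝ)
    (hA : A = (Lmat Q v + Dmat n m δ)⁻¹ * Bmat n m β)
    (hM : M = 1 - Fmat v) :
    (∀ p : Idx n m → ℝ, (∀ k, p k ∈ Set.Icc (0 : ℝ) 1) →
      IsUnit (1 + A * (Matrix.diagonal p + (1 - Matrix.diagonal p) * M)).det) ∧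
    (∀ p₁ p₂ : Idx n m → ℝ,
      (∀ k, p₁ k ∈ Set.Icc (0 : ℝ) 1) → (∀ k, p₂ k ∈ Set.Icc (0 : ℝ) 1) →
      (∀ k, p₁ k ≤ p₂ k) →
      ∀ k, Hfun A M p₁ k ≤ Hfun A M p₂ k) :=
  Hfun_monotone_general n m Q hQgen hQirr β δ hβ hδ hδpos vα hvαpos Npop hNpop v hv A M hA hM
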